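/- Let Γ be a finite additive abelian group and S a multiset of elements of Γ, with Cayley sum adjacency matrix A_S (a real symmetric matrix). Then there exists a multiset L of nonnegative real numbers such that the multiset of eigenvalues of A_S (roots of its characteristic polynomial, with multiplicity) equals M + L + (−L), where M is the multiset {χ(S) : χ a real-valued additive character of Γ} and −L = {−λ : λ ∈ L}. -/

import Mathlib

/-!
Every complex character `ψ` of `Γ` satisfies `A_S ψ = ψ(S) • ψ⁻¹`, so in the basis of characters
`A_S` is the permutation matrix of the involution `ψ ↦ ψ⁻¹ = conj ψ`, weighted by `ψ(S)`; moreover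
`ψ⁻¹(S) = conj ψ(S)`. The characteristic polynomial of such a matrix factors over the orbits of
the involution: a fixed point, i.e. a real character, contributes `X - ψ(S)` with `ψ(S)` real,
and a pair `{ψ, ψ⁻¹}` contributes a `2 × 2` block `[[0, conj ψ(S)], [ψ(S), 0]]`, whose
characteristic polynomial `X² - |ψ(S)|²` has the roots `±|ψ(S)|`.
-/

open Polynomial Matrix Finset Function

theorem Matrix.charpoly_blockDiagonal {n o R : Type*} [Fintype n] [DecidableEq n] [Fintype o]
    [DecidableEq o] [CommRing R] (M : o → Matrix n n R) :
    (blockDiagonal M).charpoly = ∏ k, (M k).charpoly := by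
  have hcharmatrix : charmatrix (blockDiagonal M) = blockDiagonal fun k => charmatrix (M k) := by
    ext ⟨i, k⟩ ⟨j, l⟩
    by_cases hkl : k = l <;> by_cases hij : i = j <;> simp [blockDiagonal_apply, hkl, hij]
  rw [charpoly, hcharmatrix, det_blockDiagonal]
  rfl

section WeightedPermMatrix

variable {ι κ R : Type*} [DecidableEq ι] [Zero R]

def weightedPermMatrix (σ : ι → ι) (d : ι → R) : Matrix ι ι R :=
  of fun i j => if i = σ j then d j else 0

theorem weightedPermMatrix_id (d : ι → R) : weightedPermMatrix id d = diagonal d := by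
  ext i j
  by_cases hij : i = j <;> simp [weightedPermMatrix, hij]

theorem weightedPermMatrix_reindex [DecidableEq κ] {σ : ι → ι} {τ : κ → κ} (e : κ ≃ ι)
    (he : ∀ k, σ (e k) = e (τ k)) (d : ι → R) :
    reindex e.symm e.symm (weightedPermMatrix σ d) = weightedPermMatrix τ (d ∘ e) := by
  ext k l
  simp [weightedPermMatrix, he]

theorem weightedPermMatrix_sumMap [DecidableEq κ] (σ : ι → ι) (τ : κ → κ) (d : ι ⊕ κ → R) :
    weightedPermMatrix (Sum.map σ τ) d =
      fromBlocks (weightedPermMatrix σ (d ∘ Sum.inl)) 0 0 (weightedPermMatrix τ (d ∘ Sum.inr)) := by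
  ext (i | i) (j | j) <;> simp [weightedPermMatrix]

theorem weightedPermMatrix_prodMap_id [DecidableEq κ] (σ : ι → ι) (d : ι × κ → R) :
    weightedPermMatrix (Prod.map σ id) d =
      blockDiagonal fun k => weightedPermMatrix σ fun i => d (i, k) := by
  ext ⟨i, k⟩ ⟨j, l⟩
  by_cases hkl : k = l <;> simp [weightedPermMatrix, blockDiagonal_apply, hkl]

end WeightedPermMatrix

theorem charpoly_weightedPermMatrix_rev {R : Type*} [CommRing R] [Nontrivial R] (d : Fin 2 → R) :
    (weightedPermMatrix Fin.rev d).charpoly = X ^ 2 - C (d 0 * d 1) := by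
  rw [charpoly_fin_two, trace_fin_two, det_fin_two]
  simp [weightedPermMatrix, mul_comm, sub_eq_add_neg]

section Involutive

variable {ι : Type*} {σ : ι → ι}

theorem Function.Involutive.exists_transversal [Fintype ι] (hσ : Involutive σ) :
    ∃ H : Finset ι, ∀ i, i ∈ H ↔ σ i ≠ i ∧ σ i ∉ H := by
  let _ : LinearOrder ι := LinearOrder.lift' _ (Fintype.equivFin ι).injective
  refine ⟨univ.filter fun i => i < σ i, fun i => ?_⟩
  simp only [mem_filter_univ, hσ i, not_lt]
  exact ⟨fun h => ⟨h.ne', h.le⟩, fun h => lt_of_le_of_ne h.2 h.1.symm⟩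

variable [DecidableEq ι] {H : Finset ι}

def Function.Involutive.fixedSumPairsEquiv (hσ : Involutive σ)
    (hH : ∀ i, i ∈ H ↔ σ i ≠ i ∧ σ i ∉ H) : {i // σ i = i} ⊕ (Fin 2 × H) ≃ ι where
  toFun := Sum.elim Subtype.val fun p => if p.1 = 0 then p.2 else σ p.2
  invFun i :=
    if hfix : σ i = i then .inl ⟨i, hfix⟩
    else if hi : i ∈ H then .inr (0, ⟨i, hi⟩)
    else .inr (1, ⟨σ i, (hH (σ i)).2 ⟨by rwa [hσ i, ne_comm], by rwa [hσ i]⟩⟩)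
  left_inv := by
    rintro (⟨i, hi⟩ | ⟨k, i, hi⟩)
    · simp [hi]
    · obtain ⟨hmoved, hpartner⟩ := (hH i).1 hi
      fin_cases k
      · simp [hi, hmoved]
      · simp [hσ i, hpartner, Ne.symm hmoved]
  right_inv i := by
    by_cases hfix : σ i = i
    · simp [hfix]
    · by_cases hi : i ∈ H <;> simp [hfix, hi, hσ i]

theorem Function.Involutive.apply_fixedSumPairsEquiv (hσ : Involutive σ)
    (hH : ∀ i, i ∈ H ↔ σ i ≠ i ∧ σ i ∉ H) (p : {i // σ i = i} ⊕ (Fin 2 × H)) :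
    σ (hσ.fixedSumPairsEquiv hH p) =
      hσ.fixedSumPairsEquiv hH (Sum.map id (Prod.map Fin.rev id) p) := by
  rcases p with ⟨i, hi⟩ | ⟨k, i, hi⟩
  · exact hi
  · fin_cases k <;> simp [fixedSumPairsEquiv, hσ i]

theorem charpoly_weightedPermMatrix_of_involutive [Fintype ι] {R : Type*} [CommRing R]
    [Nontrivial R] (hσ : Involutive σ) (hH : ∀ i, i ∈ H ↔ σ i ≠ i ∧ σ i ∉ H) (d : ι → R) :
    (weightedPermMatrix σ d).charpoly =
      (∏ i ∈ univ.filter (fun i => σ i = i), (X - C (d i))) *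
        ∏ i ∈ H, (X ^ 2 - C (d i * d (σ i))) := by
  rw [← charpoly_reindex (hσ.fixedSumPairsEquiv hH).symm,
    weightedPermMatrix_reindex _ (hσ.apply_fixedSumPairsEquiv hH), weightedPermMatrix_sumMap,
    charpoly_fromBlocks_zero₁₂, weightedPermMatrix_id, charpoly_diagonal,
    weightedPermMatrix_prodMap_id, charpoly_blockDiagonal, ← prod_coe_sort H]
  simp only [charpoly_weightedPermMatrix_rev, ← prod_subtype_eq_prod_filter, subtype_univ]
  simp [Involutive.fixedSumPairsEquiv]

open ComplexConjugate in
theorem exists_charpoly_weightedPermMatrix_eq_of_conj [Fintype ι] (hσ : Involutive σ)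
    (d : ι → ℂ) (hd : ∀ i, d (σ i) = conj (d i)) :
    ∃ L : Multiset ℝ, (∀ x ∈ L, 0 ≤ x) ∧ (weightedPermMatrix σ d).charpoly =
      ((((univ.filter fun i => σ i = i).val.map fun i => (d i).re) + L + L.map fun x => -x).map
        fun r : ℝ => X - C (r : ℂ)).prod := by
  obtain ⟨H, hH⟩ := hσ.exists_transversal
  refine ⟨H.val.map fun i => ‖d i‖, by simp, ?_⟩
  have hfixed : ∀ i ∈ univ.filter fun i => σ i = i, X - C (d i) = X - C ((d i).re : ℂ) := by
    intro i hi
    rw [Complex.conj_eq_iff_re.mp ((hd i).symm.trans (congrArg d (mem_filter.mp hi).2))]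
  have hpair (i : ι) :
      X ^ 2 - C (d i * d (σ i)) = (X - C (‖d i‖ : ℂ)) * (X - C ((-‖d i‖ : ℝ) : ℂ)) := by
    rw [hd, Complex.mul_conj', Complex.ofReal_neg, C_neg, C_pow]
    ring
  rw [charpoly_weightedPermMatrix_of_involutive hσ hH, prod_congr rfl hfixed,
    prod_congr rfl fun i _ => hpair i, prod_mul_distrib]
  simp only [Multiset.map_add, Multiset.prod_add, Multiset.map_map, comp_def,
    prod_eq_multiset_prod, mul_assoc]

end Involutive

theorem Multiset.sum_map_eq_sum_count_nsmul {α M : Type*} [Fintype α] [DecidableEq α]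
    [AddCommMonoid M] (S : Multiset α) (f : α → M) :
    (S.map f).sum = ∑ a, S.count a • f a := by
  rw [sum_multiset_map_count]
  exact sum_subset (subset_univ _) fun a _ ha => by
    rw [Multiset.count_eq_zero.mpr (by simpa using ha), zero_smul]

section AddChar

variable {Γ : Type*} [AddCommGroup Γ] [Finite Γ]

open ComplexConjugate in
theorem AddChar.sum_map_inv (S : Multiset Γ) (ψ : AddChar Γ ℂ) :
    (S.map ⇑(ψ⁻¹ : AddChar Γ ℂ)).sum = conj (S.map ψ).sum := by
  rw [map_multiset_sum, Multiset.map_map]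
  exact congrArg _ (Multiset.map_congr rfl fun a _ => by simp [AddChar.map_neg_eq_conj])

theorem AddChar.inv_eq_self_iff (ψ : AddChar Γ ℂ) : ψ⁻¹ = ψ ↔ ∀ a, (ψ a).im = 0 := by
  simp only [DFunLike.ext_iff, AddChar.inv_apply, AddChar.map_neg_eq_conj, Complex.conj_eq_iff_im]

end AddChar

section CayleySum

variable {Γ : Type*} [AddCommGroup Γ] [DecidableEq Γ]

def cayleySumMatrix (R : Type*) [NatCast R] (S : Multiset Γ) : Matrix Γ Γ R :=
  of fun u v => S.count (u + v)

theorem cayleySumMatrix_map {R R' : Type*} [Semiring R] [Semiring R'] (f : R →+* R')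
    (S : Multiset Γ) : (cayleySumMatrix R S).map f = cayleySumMatrix R' S := by
  ext u v
  simp [cayleySumMatrix]

variable [Fintype Γ]

theorem cayleySumMatrix_mulVec_addChar {R : Type*} [CommRing R] (S : Multiset Γ)
    (ψ : AddChar Γ R) : cayleySumMatrix R S *ᵥ ⇑ψ = (S.map ψ).sum • ⇑ψ⁻¹ := by
  ext u
  calc ∑ v, (S.count (u + v) : R) * ψ v
      = ∑ s, (S.count s : R) * ψ (-u + s) :=
        (Equiv.sum_comp (Equiv.addLeft (-u)) _).symm.trans (by simp)
    _ = ψ⁻¹ u * ∑ s, (S.count s : R) * ψ s := by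
        rw [mul_sum]
        refine sum_congr rfl fun s _ => ?_
        rw [AddChar.map_add_eq_mul, AddChar.inv_apply]
        ring
    _ = (S.map ψ).sum * ψ⁻¹ u := by
        rw [Multiset.sum_map_eq_sum_count_nsmul, mul_comm]
        simp

theorem toMatrix_complexBasis_cayleySumMatrix (S : Multiset Γ) :
    LinearMap.toMatrix (AddChar.complexBasis Γ) (AddChar.complexBasis Γ)
        (toLin' (cayleySumMatrix ℂ S)) =
      weightedPermMatrix (fun ψ : AddChar Γ ℂ => ψ⁻¹) fun ψ => (S.map ψ).sum := by
  ext ψ χ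
  rw [LinearMap.toMatrix_apply, AddChar.complexBasis_apply, toLin'_apply,
    cayleySumMatrix_mulVec_addChar, map_smul, ← AddChar.complexBasis_apply χ⁻¹,
    Module.Basis.repr_self]
  simp [weightedPermMatrix, Finsupp.single_apply, eq_comm]

theorem charpoly_cayleySumMatrix (S : Multiset Γ) :
    (cayleySumMatrix ℂ S).charpoly =
      (weightedPermMatrix (fun ψ : AddChar Γ ℂ => ψ⁻¹) fun ψ => (S.map ψ).sum).charpoly := by
  rw [← charpoly_toLin', ← LinearMap.charpoly_toMatrix _ (AddChar.complexBasis Γ),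
    toMatrix_complexBasis_cayleySumMatrix]

end CayleySum

open scoped Classical in
/-- For a finite additive abelian group `Γ` and a multiset `S` of elements
of `Γ` with real Cayley sum adjacency matrix `A_S(u,v) = m_S(u+v)`, there is a multiset
`L` of nonnegative reals such that the multiset of eigenvalues of `A_S` (roots of its
characteristic polynomial with multiplicity) is `M + L + (−L)`, where `M` is the
multiset of the (real) values `χ(S)` over all real-valued additive characters `χ`. -/
theorem cayley_sum_spectrum_nearly_symmetric
    {Γ : Type*} [AddCommGroup Γ] [Fintype Γ] [DecidableEq Γ]
    (S : Multiset Γ) :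
    ∃ L : Multiset ℝ, (∀ x ∈ L, 0 ≤ x) ∧
      (Matrix.charpoly (Matrix.of fun u v : Γ => (S.count (u + v) : ℝ))).roots
        = ((Finset.univ.filter
              (fun χ : AddChar Γ ℂ => ∀ a : Γ, (χ a).im = 0)).val.map
              (fun χ => ((S.map ⇑χ).sum).re))
          + L + L.map (fun x => -x) := by
  obtain ⟨L, hL, hcharpoly⟩ := exists_charpoly_weightedPermMatrix_eq_of_conj
    (σ := fun ψ : AddChar Γ ℂ => ψ⁻¹) inv_involutive (fun ψ => (S.map ψ).sum)
    (AddChar.sum_map_inv S)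
  refine ⟨L, hL, ?_⟩
  change (cayleySumMatrix ℝ S).charpoly.roots = _
  rw [← filter_congr fun ψ _ => AddChar.inv_eq_self_iff ψ]
  refine (congrArg roots (map_injective (algebraMap ℝ ℂ) Complex.ofReal_injective ?_)).trans
    (roots_multiset_prod_X_sub_C _)
  rw [← charpoly_map, cayleySumMatrix_map, charpoly_cayleySumMatrix, hcharpoly,
    Polynomial.map_multiset_prod, Multiset.map_map]
  simp
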